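/- arXiv:2504.19917 — 3 statements merged into one kernel-verified Lean document; each statement's English description precedes it below -/
import Mathlib

section
/- For a smooth compactly supported radial function u on ℝ², the pointwise bound r·u(r)² ≤ (2π)^{-1} ∫_{|y|>r} (|u(y)|² + |∇u(y)|²) dy holds for all r > 0, where u(r) denotes the value of u at radius r. -/
open MeasureTheory Real

open Set Metric in
private lemma radial_fderiv_norm_eq {u : EuclideanSpace ℝ (Fin 2) → ℝ} {v : ℝ → ℝ}
    (hd : Differentiable ℝ u) (hrad : ∀ z, u z = v ‖z‖)
    {x y : EuclideanSpace ℝ (Fin 2)} (hxy : ‖x‖ = ‖y‖) :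
    ‖fderiv ℝ u x‖ = ‖fderiv ℝ u y‖ := by
  set R := Submodule.reflection (ℝ ∙ (x - y))ᗮ with hR
  have hRx : R x = y := Submodule.reflection_sub hxy
  have hcomp : u ∘ ⇑R = u := by
    funext z
    simp [Function.comp, hrad, R.norm_map]
  have hRd : HasFDerivAt ⇑R R.toLinearIsometry.toContinuousLinearMap x :=
    R.toLinearIsometry.toContinuousLinearMap.hasFDerivAt
  have h2 : fderiv ℝ u x =
      (fderiv ℝ u (R x)).comp R.toLinearIsometry.toContinuousLinearMap := by
    conv_lhs => rw [← hcomp]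
    exact (((hd (R x)).hasFDerivAt).comp x hRd).fderiv
  rw [h2, show R.toLinearIsometry.toContinuousLinearMap =
      ((R.toContinuousLinearEquiv : _ ≃L[ℝ] _) : _ →L[ℝ] _) from rfl,
    ContinuousLinearMap.opNorm_comp_linearIsometryEquiv, hRx]

open Set Metric in
private lemma polar_two (F : ℝ → ℝ) :
    ∫ y : EuclideanSpace ℝ (Fin 2), F ‖y‖ =
      (2 * π) * ∫ s in Ioi (0:ℝ), s * F s := by
  rw [integral_fun_norm_addHaar volume F]
  have hb : (volume (ball (0 : EuclideanSpace ℝ (Fin 2)) 1)).toReal = π := by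
    rw [EuclideanSpace.volume_ball]
    norm_num
    rw [Real.sq_sqrt pi_pos.le]
  simp only [finrank_euclideanSpace, Fintype.card_fin, smul_eq_mul, nsmul_eq_mul, hb, pow_one]
  rw [← mul_assoc]
  norm_num
  exact Or.inl hb

/-- Pointwise radial bound for smooth compactly supported radial functions on `ℝ²`. -/
theorem stmt1 (u : EuclideanSpace ℝ (Fin 2) → ℝ) (v : ℝ → ℝ)
    (hu : ContDiff ℝ (⊤ : ℕ∞) u) (hsupp : HasCompactSupport u)
    (hrad : ∀ x : EuclideanSpace ℝ (Fin 2), u x = v ‖x‖) :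
    ∀ r > (0:ℝ), r * (v r)^2 ≤ (2 * π)⁻¹ *
      ∫ y in {y : EuclideanSpace ℝ (Fin 2) | r < ‖y‖},
        ((u y)^2 + ‖fderiv ℝ u y‖^2) := by
  intro r hr
  classical
  have hd : Differentiable ℝ u := hu.differentiable (by simp)
  set e : EuclideanSpace ℝ (Fin 2) := EuclideanSpace.single (0 : Fin 2) (1:ℝ) with he_def
  have he : ‖e‖ = 1 := by simp [he_def]
  -- the 1-D profile
  set φ : ℝ → ℝ := fun s => u (s • e) with hφ_def
  have hnorm_smul : ∀ s : ℝ, ‖s • e‖ = |s| := by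
    intro s; rw [norm_smul, he, mul_one, Real.norm_eq_abs]
  have hφv : ∀ s : ℝ, 0 ≤ s → φ s = v s := by
    intro s hs
    rw [hφ_def]; simp only
    rw [hrad, hnorm_smul, abs_of_nonneg hs]
  -- the radial profile of the integrand
  set w : ℝ → ℝ := fun s => ‖fderiv ℝ u (s • e)‖ with hw_def
  set f : ℝ → ℝ := fun s => (φ s)^2 + (w s)^2 with hf_def
  have hrepr : ∀ y : EuclideanSpace ℝ (Fin 2), (u y)^2 + ‖fderiv ℝ u y‖^2 = f ‖y‖ := by
    intro y
    have h1 : u y = φ ‖y‖ := by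
      rw [hrad, hφv _ (norm_nonneg y)]
    have h2 : ‖fderiv ℝ u y‖ = w ‖y‖ := by
      rw [hw_def]; simp only
      exact radial_fderiv_norm_eq hd hrad (by rw [hnorm_smul, abs_of_nonneg (norm_nonneg y)])
    rw [h1, h2, hf_def]
  -- smoothness of φ and its derivative
  set φ' : ℝ → ℝ := fun s => fderiv ℝ u (s • e) e with hφ'_def
  have hsmul : ∀ s : ℝ, HasDerivAt (fun t : ℝ => t • e) e s := by
    intro s
    simpa using (hasDerivAt_id s).smul_const e
  have hφderiv : ∀ s : ℝ, HasDerivAt φ (φ' s) s := by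
    intro s
    exact ((hd (s • e)).hasFDerivAt).comp_hasDerivAt s (hsmul s)
  have hφ'le : ∀ s : ℝ, |φ' s| ≤ w s := by
    intro s
    calc |φ' s| = ‖fderiv ℝ u (s • e) e‖ := (Real.norm_eq_abs _).symm
    _ ≤ ‖fderiv ℝ u (s • e)‖ * ‖e‖ := (fderiv ℝ u (s • e)).le_opNorm e
    _ = w s := by rw [he, mul_one]
  -- continuity facts
  have hsmul_cont : Continuous fun s : ℝ => s • e := by fun_prop
  have hφcont : Continuous φ := hu.continuous.comp hsmul_cont
  have hDcont : Continuous fun s : ℝ => fderiv ℝ u (s • e) :=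
    (hu.continuous_fderiv (by simp)).comp hsmul_cont
  have hwcont : Continuous w := hDcont.norm
  have hφ'cont : Continuous φ' := hDcont.clm_apply continuous_const
  have hfcont : Continuous f := by
    rw [hf_def]; fun_prop
  -- support bound
  obtain ⟨R0, hR0pos, hR0⟩ := hsupp.exists_pos_le_norm
  obtain ⟨R1, hR1pos, hR1⟩ := (hsupp.fderiv ℝ).exists_pos_le_norm
  set M : ℝ := max (max R0 R1) (r + 1) with hM_def
  have hrM : r ≤ M := le_trans (by linarith) (le_max_right _ _)
  have hMpos : 0 < M := lt_of_lt_of_le (by linarith) hrM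
  have hfzero : ∀ s : ℝ, M ≤ |s| → f s = 0 := by
    intro s hs
    have h0 : R0 ≤ ‖s • e‖ := by
      rw [hnorm_smul]; exact le_trans (le_trans (le_max_left _ _) (le_max_left _ _)) hs
    have h1 : R1 ≤ ‖s • e‖ := by
      rw [hnorm_smul]; exact le_trans (le_trans (le_max_right _ _) (le_max_left _ _)) hs
    have hφ0 : φ s = 0 := hR0 _ h0
    have hw0 : w s = 0 := by rw [hw_def]; simp only; rw [hR1 _ h1]; simp
    rw [hf_def]; simp [hφ0, hw0]
  -- integrability of s ↦ s * f s
  have hg_cont : Continuous fun s : ℝ => s * f s := continuous_id.mul hfcont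
  have hg_supp : HasCompactSupport fun s : ℝ => s * f s := by
    apply HasCompactSupport.intro (isCompact_Icc (a := -M) (b := M))
    intro s hs
    have : M ≤ |s| := by
      rcases abs_cases s with ⟨h, _⟩ | ⟨h, _⟩ <;>
        simp only [Set.mem_Icc, not_and_or, not_le] at hs <;> rcases hs with h' | h' <;> linarith
    rw [hfzero s this, mul_zero]
  have hg_int : IntegrableOn (fun s : ℝ => s * f s) (Set.Ioi r) :=
    (hg_cont.integrable_of_hasCompactSupport hg_supp).integrableOn
  -- FTC estimate : r * φ r ^ 2 ≤ ∫ s in Ioi r, s * f s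
  have hV : ∀ s : ℝ, HasDerivAt (fun t => t * (φ t)^2)
      ((φ s)^2 + s * (2 * φ s * φ' s)) s := by
    intro s
    have := (hasDerivAt_id' s).fun_mul ((hφderiv s).fun_pow 2)
    simpa [pow_one, mul_comm, mul_assoc, mul_left_comm] using this
  have hVint : ∫ s in r..M, ((φ s)^2 + s * (2 * φ s * φ' s)) =
      M * (φ M)^2 - r * (φ r)^2 :=
    intervalIntegral.integral_eq_sub_of_hasDerivAt (fun s _ => hV s)
      (by apply Continuous.intervalIntegrable; fun_prop)
  have hφM : φ M = 0 := by
    have : R0 ≤ ‖M • e‖ := by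
      rw [hnorm_smul, abs_of_pos hMpos]
      exact le_trans (le_max_left _ _) (le_max_left _ _)
    exact hR0 _ this
  have hkey : r * (φ r)^2 ≤ ∫ s in r..M, s * f s := by
    have hmono : ∫ s in r..M, (-((φ s)^2 + s * (2 * φ s * φ' s))) ≤ ∫ s in r..M, s * f s := by
      apply intervalIntegral.integral_mono_on hrM
      · apply Continuous.intervalIntegrable; fun_prop
      · apply Continuous.intervalIntegrable; fun_prop
      · intro s hs
        have hs0 : 0 < s := lt_of_lt_of_le hr hs.1
        have h1 : |φ' s| ≤ w s := hφ'le s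
        have hw0 : 0 ≤ w s := norm_nonneg _
        have hsq : (φ' s)^2 ≤ (w s)^2 := by
          rw [← sq_abs]
          exact pow_le_pow_left₀ (abs_nonneg _) h1 2
        rw [hf_def]
        simp only
        nlinarith [sq_nonneg (φ s + φ' s), sq_nonneg (φ s), mul_pos hs0 hs0]
    calc r * (φ r)^2 = -(M * (φ M)^2 - r * (φ r)^2) := by rw [hφM]; ring
    _ = ∫ s in r..M, (-((φ s)^2 + s * (2 * φ s * φ' s))) := by
        rw [intervalIntegral.integral_neg, hVint]
    _ ≤ ∫ s in r..M, s * f s := hmono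
  have hext : ∫ s in r..M, s * f s ≤ ∫ s in Set.Ioi r, s * f s := by
    rw [intervalIntegral.integral_of_le hrM]
    apply setIntegral_mono_set hg_int
    · filter_upwards [self_mem_ae_restrict (measurableSet_Ioi : MeasurableSet (Set.Ioi r))]
        with s hs
      simp only [Pi.zero_apply]
      have hs0 : 0 < s := lt_trans hr hs
      have h1 : (0:ℝ) ≤ f s := by rw [hf_def]; positivity
      positivity
    · exact HasSubset.Subset.eventuallyLE (fun s hs => hs.1)
  -- spatial integral equals 2π times the radial integral
  set F : ℝ → ℝ := Set.indicator (Set.Ioi r) f with hF_def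
  have hset : {y : EuclideanSpace ℝ (Fin 2) | r < ‖y‖} = norm ⁻¹' (Set.Ioi r) := rfl
  have hmeas : MeasurableSet {y : EuclideanSpace ℝ (Fin 2) | r < ‖y‖} :=
    (isOpen_lt continuous_const continuous_norm).measurableSet
  have hspatial : ∫ y in {y : EuclideanSpace ℝ (Fin 2) | r < ‖y‖},
      ((u y)^2 + ‖fderiv ℝ u y‖^2) = (2 * π) * ∫ s in Set.Ioi r, s * f s := by
    have h1 : ∫ y in {y : EuclideanSpace ℝ (Fin 2) | r < ‖y‖},
        ((u y)^2 + ‖fderiv ℝ u y‖^2) = ∫ y : EuclideanSpace ℝ (Fin 2), F ‖y‖ := by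
      rw [← integral_indicator hmeas]
      congr 1
      funext y
      simp only [hF_def, Set.indicator_apply, Set.mem_setOf_eq, Set.mem_Ioi]
      by_cases hy : r < ‖y‖ <;> simp [hy, hrepr y]
    rw [h1, polar_two F]
    congr 1
    have h2 : (fun s => s * F s) = Set.indicator (Set.Ioi r) (fun s => s * f s) := by
      funext s
      rw [hF_def]
      by_cases hs : s ∈ Set.Ioi r
      · rw [Set.indicator_of_mem hs, Set.indicator_of_mem hs]
      · rw [Set.indicator_of_notMem hs, Set.indicator_of_notMem hs, mul_zero]
    rw [h2, setIntegral_indicator measurableSet_Ioi]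
    congr 1
    rw [Set.Ioi_inter_Ioi, max_eq_right hr.le]
  rw [hspatial, ← mul_assoc, inv_mul_cancel₀ (by positivity), one_mul]
  have hvφ : v r = φ r := (hφv r hr.le).symm
  rw [hvφ]
  exact le_trans hkey hext
end

section
/- Let a < b and μ ≥ 0. For κ in a neighborhood of 1 define f(κ) = ∫_a^b π((b − κa)(t−a)/(b−a) + κa)·((b−a)/(b−κa))·g(t) dt where g : [a,b] → [0,∞) is integrable. Then f is differentiable at κ = 1 and f'(1) = (πab/(b−a)) ∫_a^b g(t) dt. In particular, if f'(1) = 0 then g = 0 a.e. on [a,b]. -/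
/-!
For fixed `κ` the integrand is affine in `g t`, with a `κ`-independent part `π (t - a) g t` and a
part `π (b - a) · κa / (b - κa) · g t`. Hence near `κ = 1` the energy is
`π ∫ (t - a) g + π (b - a) (∫ g) · κa / (b - κa)`, whose derivative at `1` is
`π a b / (b - a) · ∫ g`.
Since `a b > 0`, a vanishing derivative forces `∫ g = 0`, and a nonnegative function with zero
integral vanishes almost everywhere.
-/

open MeasureTheory Real intervalIntegral Set Filter Topology

theorem hasDerivAt_mul_div_sub_mul {a b κ : ℝ} (h : b - κ * a ≠ 0) :
    HasDerivAt (fun κ : ℝ => κ * a / (b - κ * a)) (a * b / (b - κ * a) ^ 2) κ := by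
  have hnum : HasDerivAt (fun κ : ℝ => κ * a) a κ := by
    simpa using (hasDerivAt_id κ).mul_const a
  have hden : HasDerivAt (fun κ : ℝ => b - κ * a) (-a) κ := hnum.const_sub b
  exact (hnum.div hden h).congr_deriv (by ring)

theorem integral_rescaled_energy_eq {a b κ : ℝ} {g : ℝ → ℝ} (hab : b - a ≠ 0)
    (hκ : b - κ * a ≠ 0) (hg : IntervalIntegrable g volume a b) :
    ∫ t in a..b, π * ((b - κ*a) * (t - a)/(b - a) + κ*a) * ((b - a)/(b - κ*a)) * g t =
      π * (∫ t in a..b, (t - a) * g t) +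
        π * (b - a) * (∫ t in a..b, g t) * (κ * a / (b - κ * a)) := by
  have hsplit : ∀ t : ℝ,
      π * ((b - κ*a) * (t - a)/(b - a) + κ*a) * ((b - a)/(b - κ*a)) * g t =
        π * ((t - a) * g t) + π * (b - a) * (κ * a / (b - κ * a)) * g t :=
    fun t => by field_simp
  have hsub : IntervalIntegrable (fun t => (t - a) * g t) volume a b :=
    hg.continuousOn_mul (continuousOn_id.sub continuousOn_const)
  simp only [hsplit]
  rw [integral_add (hsub.const_mul π) (hg.const_mul _), intervalIntegral.integral_const_mul,
    intervalIntegral.integral_const_mul]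
  ring

theorem ae_eq_zero_on_Icc_of_integral_eq_zero {a b : ℝ} {g : ℝ → ℝ} (hab : a ≤ b)
    (hg : IntegrableOn g (Icc a b)) (hgnn : ∀ t ∈ Icc a b, 0 ≤ g t)
    (h : ∫ t in a..b, g t = 0) : ∀ᵐ t ∂volume, t ∈ Icc a b → g t = 0 := by
  rw [integral_of_le hab, ← integral_Icc_eq_integral_Ioc] at h
  have hnn : 0 ≤ᵐ[volume.restrict (Icc a b)] g :=
    (ae_restrict_iff' measurableSet_Icc).mpr (ae_of_all _ hgnn)
  exact (ae_restrict_iff' measurableSet_Icc).mp ((integral_eq_zero_iff_of_nonneg_ae hnn hg).mp h)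

/-- Derivative at `κ = 1` of the rescaled Dirichlet energy in the Pohozaev
argument, and the resulting vanishing of `g`. -/
theorem stmt14 (a b : ℝ) (ha : 0 < a) (hab : a < b) (g : ℝ → ℝ)
    (hg : IntegrableOn g (Set.Icc a b)) (hgnn : ∀ t ∈ Set.Icc a b, 0 ≤ g t) :
    HasDerivAt (fun κ : ℝ => ∫ t in a..b,
        π * ((b - κ*a) * (t - a)/(b - a) + κ*a) * ((b - a)/(b - κ*a)) * g t)
      (π * a * b / (b - a) * ∫ t in a..b, g t) 1 ∧
    (π * a * b / (b - a) * (∫ t in a..b, g t) = 0 →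
      ∀ᵐ t : ℝ ∂volume, t ∈ Set.Icc a b → g t = 0) := by
  have hba : b - a ≠ 0 := (sub_pos.mpr hab).ne'
  have hIg : IntervalIntegrable g volume a b := (uIcc_of_le hab.le ▸ hg).intervalIntegrable
  refine ⟨?_, fun hz => ae_eq_zero_on_Icc_of_integral_eq_zero hab.le hg hgnn ?_⟩
  · have hnear : ∀ᶠ κ : ℝ in 𝓝 1, b - κ * a ≠ 0 :=
      (continuous_const.sub (continuous_id.mul continuous_const)).continuousAt.eventually_ne
        (by simpa using hba)
    have hκ1 : b - 1 * a ≠ 0 := by simpa using hba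
    have hderiv := ((hasDerivAt_mul_div_sub_mul hκ1).const_mul
      (π * (b - a) * ∫ t in a..b, g t)).const_add (π * ∫ t in a..b, (t - a) * g t)
    refine (hderiv.congr_deriv ?_).congr_of_eventuallyEq ?_
    · rw [one_mul]
      field_simp
    · filter_upwards [hnear] with κ hκ
      rw [integral_rescaled_energy_eq hba hκ hIg, mul_assoc]
  · have hcoef : π * a * b / (b - a) ≠ 0 := by
      have hb : 0 < b := ha.trans hab
      positivity
    exact (mul_eq_zero.mp hz).resolve_left hcoef
end

section
/- Let u : ℝ^n → ℝ^m be a bounded C² solution of Δu = ∇W(u), where W ∈ C¹(ℝ^m) satisfies ∇W(u)·u > 0 whenever |u| ≥ R₀. Then |u(x)| < R₀ for all x ∈ ℝ^n, provided sup |u| < ∞. -/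
/-!
Let `ρ = ‖u‖²`. At a local maximum `z` of `ρ - ε ‖·‖²`, the second derivative test along the
coordinate directions gives `⟪Δu z, u z⟫ + ‖Du z‖² ≤ n ε`, i.e. `⟪∇W (u z), u z⟫ ≤ n ε`.
By compactness of the annulus `R₀ ≤ ‖v‖ ≤ C`, `⟪∇W v, v⟫ ≥ δ > 0` there, so for `n ε < δ`
every such maximum satisfies `‖u z‖ < R₀`. As `u` is bounded, `ρ - ε ‖·‖²` attains a global
maximum for every `ε > 0`, which stands in for the possibly unattained supremum of `ρ`:
letting `ε → 0` gives `ρ ≤ R₀²`, and a point with `ρ = R₀²` would be a maximum of `ρ` itself.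
-/

open Filter Topology RealInnerProductSpace

theorem IsLocalMax.deriv_deriv_nonpos {f : ℝ → ℝ} {a : ℝ} (h : IsLocalMax f a)
    (hc : ContinuousAt f a) : deriv (deriv f) a ≤ 0 := by
  by_contra! hpos
  have hconst : f =ᶠ[𝓝 a] fun _ => f a :=
    (h.and (isLocalMin_of_deriv_deriv_pos hpos h.deriv_eq_zero hc)).mono
      fun _ hy => le_antisymm hy.1 hy.2
  have : deriv (deriv f) a = 0 := by
    rw [hconst.deriv.deriv_eq]
    simp
  linarith

section

variable {E F : Type*} [NormedAddCommGroup E] [InnerProductSpace ℝ E]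
  [NormedAddCommGroup F] [InnerProductSpace ℝ F]

theorem IsLocalMax.inner_iteratedFDeriv_two_add_norm_sq_le {u : E → F} (hu : ContDiff ℝ 2 u)
    {ε : ℝ} {x : E} (hmax : IsLocalMax (fun y => ‖u y‖ ^ 2 - ε * ‖y‖ ^ 2) x) (v : E) :
    ⟪iteratedFDeriv ℝ 2 u x ![v, v], u x⟫ + ‖fderiv ℝ u x v‖ ^ 2 ≤ ε * ‖v‖ ^ 2 := by
  set L : ℝ → E := fun t => x + t • v
  have hL : ∀ t, HasDerivAt L v t := fun t => by
    simpa [L] using ((hasDerivAt_id t).smul_const v).const_add x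
  have hL0 : L 0 = x := by simp [L]
  have hu1 : Differentiable ℝ u := hu.differentiable two_ne_zero
  have hu2 : Differentiable ℝ (fderiv ℝ u) :=
    (hu.fderiv_right (m := 1) le_rfl).differentiable one_ne_zero
  have huL : ∀ t, HasDerivAt (fun t => u (L t)) (fderiv ℝ u (L t) v) t := fun t =>
    (hu1 (L t)).hasFDerivAt.comp_hasDerivAt t (hL t)
  have hDuL : HasDerivAt (fun t => fderiv ℝ u (L t) v) (iteratedFDeriv ℝ 2 u x ![v, v]) 0 := by
    rw [iteratedFDeriv_two_apply, ← hL0]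
    simpa using ((hu2 (L 0)).hasFDerivAt.comp_hasDerivAt 0 (hL 0)).clm_apply
      (hasDerivAt_const 0 v)
  set φ : ℝ → ℝ := fun t => ‖u (L t)‖ ^ 2 - ε * ‖L t‖ ^ 2
  have hφ : ∀ t, HasDerivAt φ (2 * ⟪u (L t), fderiv ℝ u (L t) v⟫ - ε * (2 * ⟪L t, v⟫)) t :=
    fun t => ((huL t).norm_sq).sub (((hL t).norm_sq).const_mul ε)
  have hφ'' : deriv (deriv φ) 0 =
      2 * (⟪iteratedFDeriv ℝ 2 u x ![v, v], u x⟫ + ‖fderiv ℝ u x v‖ ^ 2) - ε * (2 * ‖v‖ ^ 2) := by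
    rw [funext fun t => (hφ t).deriv]
    have := (((huL 0).inner ℝ hDuL).const_mul 2).sub
      ((((hL 0).inner ℝ (hasDerivAt_const 0 v))).const_mul 2 |>.const_mul ε)
    simp only [hL0, inner_zero_right, zero_add, real_inner_self_eq_norm_sq] at this
    exact (this.congr_deriv (by rw [real_inner_comm])).deriv
  have hmaxφ : IsLocalMax φ 0 := by
    have hLc : Tendsto L (𝓝 0) (𝓝 x) := hL0 ▸ (hL 0).continuousAt
    simpa [φ, IsLocalMax, IsMaxFilter, hL0] using hLc.eventually hmax
  have := hmaxφ.deriv_deriv_nonpos (hφ 0).continuousAt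
  linarith

end

section

variable {E F : Type*} [NormedAddCommGroup E] [InnerProductSpace ℝ E]
  [NormedAddCommGroup F] [InnerProductSpace ℝ F]

theorem IsLocalMax.inner_sum_iteratedFDeriv_two_le {ι : Type*} [Fintype ι] {u : E → F}
    (hu : ContDiff ℝ 2 u) {ε : ℝ} {x : E}
    (hmax : IsLocalMax (fun y => ‖u y‖ ^ 2 - ε * ‖y‖ ^ 2) x) {v : ι → E} (hv : ∀ i, ‖v i‖ = 1) :
    ⟪∑ i, iteratedFDeriv ℝ 2 u x ![v i, v i], u x⟫ ≤ Fintype.card ι * ε := by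
  have hdir (i : ι) : ⟪iteratedFDeriv ℝ 2 u x ![v i, v i], u x⟫ ≤ ε := by
    have := hmax.inner_iteratedFDeriv_two_add_norm_sq_le hu (v i)
    rw [hv i, one_pow, mul_one] at this
    nlinarith [sq_nonneg ‖fderiv ℝ u x (v i)‖]
  calc ⟪∑ i, iteratedFDeriv ℝ 2 u x ![v i, v i], u x⟫
      = ∑ i, ⟪iteratedFDeriv ℝ 2 u x ![v i, v i], u x⟫ := sum_inner _ _ _
    _ ≤ ∑ _i : ι, ε := Finset.sum_le_sum fun i _ => hdir i
    _ = Fintype.card ι * ε := by simp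

end

section

variable {E : Type*} [SeminormedAddCommGroup E] [ProperSpace E]

theorem exists_forall_sub_mul_norm_sq_le {ρ : E → ℝ} (hρ : Continuous ρ) {C : ℝ}
    (hC : ∀ y, ρ y ≤ C) {ε : ℝ} (hε : 0 < ε) :
    ∃ z, ∀ y, ρ y - ε * ‖y‖ ^ 2 ≤ ρ z - ε * ‖z‖ ^ 2 := by
  refine Continuous.exists_forall_ge (f := fun y => ρ y - ε * ‖y‖ ^ 2) (by fun_prop) ?_
  have hnorm : Tendsto (fun y : E => C - ε * ‖y‖ ^ 2) (cocompact E) atBot :=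
    tendsto_atBot_add_const_left _ C <| tendsto_neg_atTop_atBot.comp <|
      ((tendsto_pow_atTop two_ne_zero).comp tendsto_norm_cocompact_atTop).const_mul_atTop hε
  exact tendsto_atBot_mono (fun y => by linarith [hC y]) hnorm

theorem lt_of_forall_isLocalMax_sub_mul_norm_sq {ρ : E → ℝ} (hρ : Continuous ρ) {C : ℝ}
    (hC : ∀ y, ρ y ≤ C) {c : ℝ}
    (h : ∀ᶠ ε in 𝓝[≥] 0, ∀ z, IsLocalMax (fun y => ρ y - ε * ‖y‖ ^ 2) z → ρ z < c) (x : E) :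
    ρ x < c := by
  have hle : ∀ y, ρ y ≤ c := by
    intro y
    by_contra! hy
    have hsmall : ∀ᶠ ε in 𝓝[>] (0 : ℝ), ε * ‖y‖ ^ 2 < ρ y - c :=
      nhdsWithin_le_nhds <| ((continuous_id.mul continuous_const).tendsto' 0 0 (by simp)).eventually
        (gt_mem_nhds (sub_pos.2 hy))
    obtain ⟨ε, hεc, hεy, hε⟩ := ((h.filter_mono (nhdsWithin_mono 0 Set.Ioi_subset_Ici_self)).and
      (hsmall.and self_mem_nhdsWithin)).exists
    obtain ⟨z, hz⟩ := exists_forall_sub_mul_norm_sq_le hρ hC hε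
    have hzc := hεc z (Eventually.of_forall hz)
    have hzy := hz y
    nlinarith [sq_nonneg ‖z‖]
  by_contra! hx
  have hmax : IsLocalMax (fun y => ρ y - 0 * ‖y‖ ^ 2) x :=
    Eventually.of_forall fun y => by simpa [le_antisymm (hle x) hx] using hle y
  exact (h.self_of_nhdsWithin Set.self_mem_Ici x hmax).not_ge hx

end

/-- Maximum principle bound: a bounded entire solution of `Δu = ∇W(u)` with
`∇W(u)·u > 0` for `|u| ≥ R₀` satisfies `|u| < R₀` everywhere. -/
theorem stmt15 {n m : ℕ} (W : EuclideanSpace ℝ (Fin m) → ℝ) (hW : ContDiff ℝ 1 W)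
    (R₀ : ℝ) (hR₀ : 0 < R₀)
    (hWgrad : ∀ v : EuclideanSpace ℝ (Fin m), R₀ ≤ ‖v‖ →
      0 < (inner ℝ (gradient W v) v : ℝ))
    (u : EuclideanSpace ℝ (Fin n) → EuclideanSpace ℝ (Fin m))
    (hu : ContDiff ℝ 2 u) (C : ℝ) (hbdd : ∀ x, ‖u x‖ ≤ C)
    (heq : ∀ x, (∑ i : Fin n, iteratedFDeriv ℝ 2 u x
        ![EuclideanSpace.single i 1, EuclideanSpace.single i 1]) = gradient W (u x)) :
    ∀ x, ‖u x‖ < R₀ := by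
  have hcont : Continuous fun v => ⟪gradient W v, v⟫ := by
    simp_rw [inner_gradient_left]
    exact (hW.continuous_fderiv one_ne_zero).clm_apply continuous_id
  obtain ⟨δ, hδ, hδle⟩ := ((isCompact_closedBall 0 C).inter_right
    (isClosed_le continuous_const continuous_norm)).exists_forall_le' hcont.continuousOn
    fun v hv => hWgrad v hv.2
  have hsmall : ∀ᶠ ε in 𝓝[≥] (0 : ℝ), n * ε < δ :=
    nhdsWithin_le_nhds <| ((continuous_const.mul continuous_id).tendsto' 0 0 (by simp)).eventually
      (gt_mem_nhds hδ)
  have hunit (i : Fin n) : ‖EuclideanSpace.single i (1 : ℝ)‖ = 1 := by simp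
  intro x
  refine lt_of_pow_lt_pow_left₀ 2 hR₀.le <| lt_of_forall_isLocalMax_sub_mul_norm_sq
    (ρ := fun y => ‖u y‖ ^ 2) (by fun_prop) (fun y => pow_le_pow_left₀ (norm_nonneg _) (hbdd y) 2)
    ?_ x
  filter_upwards [hsmall] with ε hε z hz
  by_contra! hge
  have hR : R₀ ≤ ‖u z‖ := le_of_pow_le_pow_left₀ two_ne_zero (norm_nonneg _) hge
  have hlap := hz.inner_sum_iteratedFDeriv_two_le hu hunit
  rw [heq z, Fintype.card_fin] at hlap
  linarith [hδle (u z) ⟨mem_closedBall_zero_iff.2 (hbdd z), hR⟩]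
end
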